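/- For the GHZ class pure state |ψ⟩ = cos θ |000⟩ + sin θ |111⟩, the relative entropy of coherence in the computational basis equals the binary entropy H(cos²θ) = −cos²θ log₂ cos²θ − sin²θ log₂ sin²θ, and consequently the Bell-type combination B_{C_r} = 6 + 2H(cos²θ) ≥ 6, with strict inequality when θ ∈ (0, π/2). -/

import Mathlib

open Matrix
open scoped ComplexOrder

/-- Von Neumann entropy (base 2) of a Hermitian matrix, via its eigenvalues. -/
noncomputable def vnEntropy {n : Type*} [Fintype n] [DecidableEq n] (ρ : Matrix n n ℂ) : ℝ :=
  if h : ρ.IsHermitian then (∑ i, Real.negMulLog (h.eigenvalues i)) / Real.log 2 else 0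

/-- Relative entropy of coherence in the standard (computational) basis. -/
noncomputable def Cr {n : Type*} [Fintype n] [DecidableEq n] (ρ : Matrix n n ℂ) : ℝ :=
  vnEntropy (Matrix.diagonal (fun i => ρ i i)) - vnEntropy ρ

/-- The GHZ-class pure state `cos θ |000⟩ + sin θ |111⟩`. -/
noncomputable def ghzClass (θ : ℝ) : (Fin 2 × Fin 2 × Fin 2) → ℂ := fun p =>
  if p = (0, 0, 0) then (Real.cos θ : ℂ)
  else if p = (1, 1, 1) then (Real.sin θ : ℂ) else 0

/-- Binary entropy of `cos²θ` (base 2). -/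
noncomputable def binEnt (θ : ℝ) : ℝ :=
  -(Real.cos θ ^ 2 * Real.logb 2 (Real.cos θ ^ 2)
    + Real.sin θ ^ 2 * Real.logb 2 (Real.sin θ ^ 2))

/-!
A pure state `v vᴴ` with `‖v‖ = 1` is a Hermitian idempotent, so its eigenvalues lie in
`{0, 1}` and its von Neumann entropy vanishes. Hence `C_r` is the entropy of the dephased
state, a diagonal matrix whose eigenvalues are its entries `|vᵢ|²`; for the GHZ-class state
these are `cos²θ` and `sin²θ`, so `C_r` is the binary entropy of `cos²θ`, which is positive
on `(0, 1)`.
-/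

open Real

namespace Matrix

variable {n 𝕜 : Type*} [RCLike 𝕜]

lemma IsHermitian.eigenvalues_mem_of_isIdempotentElem [Fintype n] [DecidableEq n]
    {A : Matrix n n 𝕜} (hA : A.IsHermitian) (hP : IsIdempotentElem A) (i : n) :
    hA.eigenvalues i ∈ ({0, 1} : Set ℝ) :=
  hP.spectrum_subset ℝ (hA.eigenvalues_mem_spectrum_real i)

lemma IsHermitian.sum_eigenvalues_diagonal [Fintype n] [DecidableEq n] {d : n → ℝ}
    (hd : (diagonal fun i => (d i : 𝕜)).IsHermitian) (f : ℝ → ℝ) :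
    ∑ i, f (hd.eigenvalues i) = ∑ i, f (d i) := by
  have hroots := hd.roots_charpoly_eq_eigenvalues
  rw [charpoly_diagonal, Polynomial.roots_prod _ _ (by
    simp [Finset.prod_ne_zero_iff, Polynomial.X_sub_C_ne_zero])] at hroots
  simp only [Polynomial.roots_X_sub_C, Multiset.bind_singleton] at hroots
  have := congrArg (fun s : Multiset 𝕜 => (s.map (f ∘ RCLike.re)).sum) hroots
  simp only [Multiset.map_map, Function.comp_def, RCLike.ofReal_re] at this
  exact this.symm

lemma isHermitian_vecMulVec_star (v : n → 𝕜) : (vecMulVec v (star v)).IsHermitian := by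
  rw [IsHermitian, conjTranspose_vecMulVec, star_star]

lemma isIdempotentElem_vecMulVec_star [Fintype n] {v : n → 𝕜} (hv : star v ⬝ᵥ v = 1) :
    IsIdempotentElem (vecMulVec v (star v)) := by
  rw [IsIdempotentElem, vecMulVec_mul_vecMulVec, hv, one_smul]

end Matrix

section Entropy

variable {n : Type*} [Fintype n] [DecidableEq n]

lemma vnEntropy_eq_zero_of_isIdempotentElem {ρ : Matrix n n ℂ} (hρ : ρ.IsHermitian)
    (hP : IsIdempotentElem ρ) : vnEntropy ρ = 0 := by
  have hzero (i : n) : negMulLog (hρ.eigenvalues i) = 0 := by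
    obtain h | h : hρ.eigenvalues i = 0 ∨ hρ.eigenvalues i = 1 :=
      hρ.eigenvalues_mem_of_isIdempotentElem hP i
    all_goals simp [h]
  simp [vnEntropy, dif_pos hρ, hzero]

lemma vnEntropy_diagonal_ofReal (d : n → ℝ) :
    vnEntropy (Matrix.diagonal fun i => (d i : ℂ)) = (∑ i, negMulLog (d i)) / log 2 := by
  have hd : (Matrix.diagonal fun i => (d i : ℂ)).IsHermitian := by
    simp [Matrix.IsHermitian, Matrix.diagonal_conjTranspose, Pi.star_def]
  rw [vnEntropy, dif_pos hd, hd.sum_eigenvalues_diagonal]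

lemma Cr_vecMulVec_star {v : n → ℂ} (hv : star v ⬝ᵥ v = 1) :
    Cr (Matrix.vecMulVec v (star v)) = (∑ i, negMulLog (Complex.normSq (v i))) / log 2 := by
  have hdiag :
      (fun i => Matrix.vecMulVec v (star v) i i) = fun i => (Complex.normSq (v i) : ℂ) := by
    funext i
    simp [Matrix.vecMulVec_apply, Complex.mul_conj]
  rw [Cr, hdiag, vnEntropy_diagonal_ofReal,
    vnEntropy_eq_zero_of_isIdempotentElem (Matrix.isHermitian_vecMulVec_star v)
      (Matrix.isIdempotentElem_vecMulVec_star hv), sub_zero]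

end Entropy

lemma sum_ghzClass {M : Type*} [AddCommMonoid M] (θ : ℝ) {g : ℂ → M} (hg : g 0 = 0) :
    ∑ p, g (ghzClass θ p) = g (cos θ) + g (sin θ) := by
  rw [Fintype.sum_eq_add (0, 0, 0) (1, 1, 1) (by decide)]
  · simp [ghzClass]
  · rintro p ⟨h₀, h₁⟩
    simp [ghzClass, h₀, h₁, hg]

lemma star_ghzClass_dotProduct (θ : ℝ) : star (ghzClass θ) ⬝ᵥ ghzClass θ = 1 := by
  simp only [dotProduct, Pi.star_apply]
  rw [sum_ghzClass θ (g := fun z => star z * z) (by simp)]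
  simp only [Complex.star_def, Complex.conj_ofReal]
  exact_mod_cast by simpa [sq] using cos_sq_add_sin_sq θ

lemma sum_negMulLog_normSq_ghzClass (θ : ℝ) :
    ∑ p, negMulLog (Complex.normSq (ghzClass θ p)) = binEntropy (cos θ ^ 2) := by
  rw [sum_ghzClass θ (g := fun z => negMulLog (Complex.normSq z)) (by simp),
    binEntropy_eq_negMulLog_add_negMulLog_one_sub, ← sin_sq]
  simp only [Complex.normSq_ofReal, sq]

lemma binEnt_eq_binEntropy (θ : ℝ) : binEnt θ = binEntropy (cos θ ^ 2) / log 2 := by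
  rw [binEntropy_eq_negMulLog_add_negMulLog_one_sub, ← sin_sq, binEnt]
  simp only [negMulLog, logb]
  ring

lemma binEnt_nonneg (θ : ℝ) : 0 ≤ binEnt θ := by
  rw [binEnt_eq_binEntropy]
  have := binEntropy_nonneg (sq_nonneg (cos θ)) (cos_sq_le_one θ)
  have := log_pos one_lt_two
  positivity

lemma binEnt_pos {θ : ℝ} (hθ : θ ∈ Set.Ioo 0 (π / 2)) : 0 < binEnt θ := by
  have hcos : 0 < cos θ := cos_pos_of_mem_Ioo ⟨by linarith [pi_pos, hθ.1], hθ.2⟩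
  have hsin : 0 < sin θ := sin_pos_of_pos_of_lt_pi hθ.1 (by linarith [pi_pos, hθ.2])
  have hcos_lt : cos θ ^ 2 < 1 := by nlinarith [sin_sq_add_cos_sq θ]
  rw [binEnt_eq_binEntropy]
  have := binEntropy_pos (by positivity) hcos_lt
  have := log_pos one_lt_two
  positivity

theorem stmt_14 (θ : ℝ) :
    Cr (Matrix.vecMulVec (ghzClass θ) (star (ghzClass θ))) = binEnt θ ∧
    6 + 2 * binEnt θ ≥ 6 ∧
    (θ ∈ Set.Ioo 0 (Real.pi / 2) → 6 + 2 * binEnt θ > 6) := by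
  refine ⟨?_, by linarith [binEnt_nonneg θ], fun hθ => by linarith [binEnt_pos hθ]⟩
  rw [Cr_vecMulVec_star (star_ghzClass_dotProduct θ), sum_negMulLog_normSq_ghzClass,
    binEnt_eq_binEntropy]
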